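/- Let u : B³ ∖ {0} → ℝ³ be the vortex map u(x) = x/‖x‖, where B³ is the open unit ball of ℝ³, and let cof ∇u(x) denote the cofactor matrix of the Jacobian matrix of u at x. Then for every exponent q with 1 ≤ q < 3/2 one has ∫_{B³} ‖cof ∇u(x)‖_F^q dx < ∞. In particular ∫_{B³} √(1 + ‖∇u‖_F² + ‖cof ∇u‖_F²) dx < ∞, so the graph of u over B³ has finite 3-dimensional area. -/

import Mathlib

open MeasureTheory Filter

noncomputable section

abbrev E3 := EuclideanSpace ℝ (Fin 3)

/-- The vortex map `u(x) = x / ‖x‖` on `ℝ³ ∖ {0}`. -/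
def vortex (x : E3) : E3 := ‖x‖⁻¹ • x

/-- The Jacobian matrix of a map `v : ℝ³ → ℝ³` at `x`, in the standard basis
(`0` at points of non-differentiability, as is the convention for `fderiv`). -/
def jac (v : E3 → E3) (x : E3) : Matrix (Fin 3) (Fin 3) ℝ :=
  fun i j => fderiv ℝ v x (EuclideanSpace.single j 1) i

/-- The cofactor matrix of a 3×3 matrix: the transpose of its adjugate. -/
def cof (A : Matrix (Fin 3) (Fin 3) ℝ) : Matrix (Fin 3) (Fin 3) ℝ := (Matrix.adjugate A).transpose

/-- The Frobenius norm of a 3×3 matrix. -/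
def fnorm (A : Matrix (Fin 3) (Fin 3) ℝ) : ℝ :=
  Real.sqrt (∑ i : Fin 3, ∑ j : Fin 3, (A i j) ^ 2)

open Metric Set in
/-- Integrability of negative powers of the norm on the unit ball of `ℝ³`. -/
lemma integrableOn_norm_rpow_neg_ball {s : ℝ} (hs0 : 0 < s) (hs : s < 3) :
    IntegrableOn (fun x : E3 => ‖x‖ ^ (-s)) (Metric.ball (0:E3) 1) volume := by
  have hmeas : Measurable fun x : E3 => ‖x‖ ^ (-s) := by fun_prop
  have hnn : ∀ x : E3, 0 ≤ ‖x‖ ^ (-s) := fun x => Real.rpow_nonneg (norm_nonneg x) _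
  refine ⟨hmeas.aestronglyMeasurable, ?_⟩
  rw [hasFiniteIntegral_iff_norm]
  simp only [Real.norm_eq_abs, abs_of_nonneg (hnn _)]
  set μ := volume.restrict (Metric.ball (0:E3) 1) with hμ
  rw [lintegral_eq_lintegral_meas_le μ (Eventually.of_forall hnn) hmeas.aemeasurable]
  set mB := volume (Metric.ball (0:E3) 1) with hmB
  have hmBfin : mB < ⊤ := measure_ball_lt_top
  calc ∫⁻ t in Ioi (0:ℝ), μ {a | t ≤ ‖a‖ ^ (-s)}
      ≤ ∫⁻ t in Ioc (0:ℝ) 1 ∪ Ioi 1, μ {a | t ≤ ‖a‖ ^ (-s)} :=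
        lintegral_mono_set Ioi_subset_Ioc_union_Ioi
    _ ≤ (∫⁻ t in Ioc (0:ℝ) 1, μ {a | t ≤ ‖a‖ ^ (-s)})
          + ∫⁻ t in Ioi (1:ℝ), μ {a | t ≤ ‖a‖ ^ (-s)} := lintegral_union_le _ _ _
    _ < ⊤ := by
        refine ENNReal.add_lt_top.2 ⟨?_, ?_⟩
        · calc (∫⁻ t in Ioc (0:ℝ) 1, μ {a | t ≤ ‖a‖ ^ (-s)})
              ≤ ∫⁻ _ in Ioc (0:ℝ) 1, mB := by
                refine lintegral_mono fun t => ?_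
                exact le_trans (measure_mono (subset_univ _))
                  (by rw [hμ, Measure.restrict_apply_univ])
            _ = mB * volume (Ioc (0:ℝ) 1) := setLIntegral_const _ _
            _ < ⊤ := ENNReal.mul_lt_top hmBfin (by simp)
        · have hsub : ∀ t ∈ Ioi (1:ℝ),
              μ {a | t ≤ ‖a‖ ^ (-s)} ≤ ENNReal.ofReal (t ^ (-(3/s))) * mB := by
            intro t ht
            have ht0 : (0:ℝ) < t := lt_trans one_pos ht
            have hsubset : {a : E3 | t ≤ ‖a‖ ^ (-s)} ⊆ closedBall 0 (t ^ (-s)⁻¹) := by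
              intro a ha
              simp only [mem_setOf_eq] at ha
              have ha0 : a ≠ 0 := by
                rintro rfl
                rw [norm_zero, Real.zero_rpow (by linarith : -s ≠ 0)] at ha
                linarith
              have hna : 0 < ‖a‖ := norm_pos_iff.2 ha0
              rw [mem_closedBall_zero_iff]
              exact (Real.le_rpow_inv_iff_of_neg hna ht0 (by linarith : -s < 0)).2 ha
            calc μ {a : E3 | t ≤ ‖a‖ ^ (-s)}
                ≤ volume {a : E3 | t ≤ ‖a‖ ^ (-s)} := by
                  rw [hμ]; exact Measure.restrict_le_self _
              _ ≤ volume (closedBall (0:E3) (t ^ (-s)⁻¹)) := measure_mono hsubset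
              _ = ENNReal.ofReal ((t ^ (-s)⁻¹) ^ (Module.finrank ℝ E3)) * mB :=
                  Measure.addHaar_closedBall _ _ (Real.rpow_nonneg ht0.le _)
              _ = ENNReal.ofReal (t ^ (-(3/s))) * mB := by
                  congr 2
                  rw [finrank_euclideanSpace_fin, ← Real.rpow_natCast (t ^ (-s)⁻¹) 3,
                    ← Real.rpow_mul ht0.le]
                  norm_num
                  ring_nf
          calc (∫⁻ t in Ioi (1:ℝ), μ {a | t ≤ ‖a‖ ^ (-s)})
              ≤ ∫⁻ t in Ioi (1:ℝ), ENNReal.ofReal (t ^ (-(3/s))) * mB :=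
                setLIntegral_mono' measurableSet_Ioi hsub
            _ = (∫⁻ t in Ioi (1:ℝ), ENNReal.ofReal (t ^ (-(3/s)))) * mB :=
                lintegral_mul_const' _ _ hmBfin.ne
            _ < ⊤ := by
                refine ENNReal.mul_lt_top ?_ hmBfin
                refine IntegrableOn.setLIntegral_lt_top ?_
                refine integrableOn_Ioi_rpow_of_lt ?_ one_pos
                rw [neg_lt_neg_iff]
                rw [lt_div_iff₀ hs0]
                linarith

/-- Coordinates are bounded by the norm in Euclidean space. -/
lemma coord_abs_le (v : E3) (i : Fin 3) : |v i| ≤ ‖v‖ := by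
  rw [EuclideanSpace.norm_eq]
  have h1 : |v i| = Real.sqrt (‖v i‖ ^ 2) := by
    rw [Real.sqrt_sq_eq_abs, Real.norm_eq_abs, abs_abs]
  rw [h1]
  exact Real.sqrt_le_sqrt (Finset.single_le_sum (f := fun j => ‖v j‖ ^ 2)
    (fun j _ => by positivity) (Finset.mem_univ i))

/-- The entries of the Jacobian of the vortex map are bounded by `2 / ‖x‖`. -/
lemma vortex_fderiv_bound {x : E3} (hx : x ≠ 0) (i j : Fin 3) :
    |jac vortex x i j| ≤ 2 * ‖x‖⁻¹ := by
  have hnx : (0:ℝ) < ‖x‖ := norm_pos_iff.2 hx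
  have hdn : DifferentiableAt ℝ (fun y : E3 => ‖y‖) x :=
    DifferentiableAt.norm ℝ differentiableAt_id hx
  set n' := fderiv ℝ (fun y : E3 => ‖y‖) x with hn'
  have hn : HasFDerivAt (fun y : E3 => ‖y‖) n' x := hdn.hasFDerivAt
  have hn'le : ‖n'‖ ≤ 1 := by
    simpa using norm_fderiv_le_of_lipschitz ℝ (lipschitzWith_one_norm (E := E3)) (x₀ := x)
  set g' : E3 →L[ℝ] ℝ :=
    ((ContinuousLinearMap.smulRight (1 : ℝ →L[ℝ] ℝ) (-(‖x‖ ^ 2)⁻¹)).comp n') with hg'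
  have hg : HasFDerivAt (fun y : E3 => ‖y‖⁻¹) g' x :=
    (hasFDerivAt_inv (ne_of_gt hnx)).comp x hn
  have hg'le : ‖g'‖ ≤ (‖x‖ ^ 2)⁻¹ := by
    refine (ContinuousLinearMap.opNorm_comp_le _ _).trans ?_
    have h1 : ‖(ContinuousLinearMap.smulRight (1 : ℝ →L[ℝ] ℝ) (-(‖x‖ ^ 2)⁻¹))‖
        = (‖x‖ ^ 2)⁻¹ := by
      rw [ContinuousLinearMap.norm_smulRight_apply]
      simp [abs_of_nonneg (by positivity : (0:ℝ) ≤ (‖x‖^2)⁻¹)]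
    rw [h1]
    exact mul_le_of_le_one_right (by positivity) hn'le
  set D : E3 →L[ℝ] E3 :=
    ‖x‖⁻¹ • ContinuousLinearMap.id ℝ E3 + g'.smulRight x with hD
  have hv : HasFDerivAt vortex D x := by
    have := hg.smul (hasFDerivAt_id x)
    exact this
  have hDle : ‖D‖ ≤ 2 * ‖x‖⁻¹ := by
    refine (norm_add_le _ _).trans ?_
    have h2 : ‖(‖x‖⁻¹ • ContinuousLinearMap.id ℝ E3)‖ ≤ ‖x‖⁻¹ := by
      refine (norm_smul_le (‖x‖⁻¹) (ContinuousLinearMap.id ℝ E3)).trans ?_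
      rw [Real.norm_eq_abs, abs_of_nonneg (inv_nonneg.2 hnx.le)]
      exact mul_le_of_le_one_right (inv_nonneg.2 hnx.le) ContinuousLinearMap.norm_id_le
    have h3 : ‖g'.smulRight x‖ ≤ ‖x‖⁻¹ := by
      rw [ContinuousLinearMap.norm_smulRight_apply]
      calc ‖g'‖ * ‖x‖ ≤ (‖x‖ ^ 2)⁻¹ * ‖x‖ := by nlinarith
        _ = ‖x‖⁻¹ := by field_simp
    linarith
  have hf : fderiv ℝ vortex x = D := hv.fderiv
  calc |jac vortex x i j| ≤ ‖fderiv ℝ vortex x (EuclideanSpace.single j 1)‖ :=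
        coord_abs_le _ i
    _ ≤ ‖fderiv ℝ vortex x‖ * ‖(EuclideanSpace.single j (1:ℝ) : E3)‖ :=
        ContinuousLinearMap.le_opNorm _ _
    _ ≤ 2 * ‖x‖⁻¹ := by
        rw [hf, EuclideanSpace.norm_single]
        simpa using hDle

/-- An entrywise bound gives a Frobenius-norm bound. -/
lemma fnorm_le {A : Matrix (Fin 3) (Fin 3) ℝ} {M : ℝ} (hM : 0 ≤ M)
    (h : ∀ i j, |A i j| ≤ M) : fnorm A ≤ 3 * M := by
  have h9 : (∑ i : Fin 3, ∑ j : Fin 3, (A i j) ^ 2) ≤ 9 * M ^ 2 := by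
    have key : ∀ i j : Fin 3, (A i j) ^ 2 ≤ M ^ 2 := fun i j => by
      rw [← sq_abs]; exact pow_le_pow_left₀ (abs_nonneg _) (h i j) 2
    calc (∑ i : Fin 3, ∑ j : Fin 3, (A i j) ^ 2)
        ≤ ∑ _i : Fin 3, ∑ _j : Fin 3, M ^ 2 :=
          Finset.sum_le_sum fun i _ => Finset.sum_le_sum fun j _ => key i j
      _ = 9 * M ^ 2 := by simp; ring
  calc fnorm A ≤ Real.sqrt (9 * M ^ 2) := Real.sqrt_le_sqrt h9
    _ = 3 * M := by
        rw [show (9 : ℝ) * M ^ 2 = (3 * M) ^ 2 by ring, Real.sqrt_sq (by positivity)]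

/-- An entrywise bound on a matrix gives an entrywise bound on its cofactor matrix. -/
lemma cof_entry_le {A : Matrix (Fin 3) (Fin 3) ℝ} {M : ℝ} (hM : 0 ≤ M)
    (h : ∀ i j, |A i j| ≤ M) (i j : Fin 3) : |cof A i j| ≤ 2 * M ^ 2 := by
  have key2 : ∀ a b c d : ℝ, |a| ≤ M → |b| ≤ M → |c| ≤ M → |d| ≤ M →
      |a * b - c * d| ≤ 2 * M ^ 2 := by
    intro a b c d ha hb hc hd
    have h1 := abs_sub (a * b) (c * d)
    rw [abs_mul, abs_mul] at h1
    nlinarith [abs_nonneg a, abs_nonneg b, abs_nonneg c, abs_nonneg d]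
  unfold cof
  rw [Matrix.transpose_apply, Matrix.adjugate_fin_three]
  fin_cases i <;> fin_cases j <;>
    simp only [Matrix.cons_val', Matrix.cons_val_zero, Matrix.cons_val_one, Matrix.head_cons,
      Matrix.empty_val', Matrix.cons_val_fin_one, Matrix.head_fin_const, neg_add_eq_sub,
      Matrix.cons_val_two, Matrix.tail_cons, Fin.isValue] <;>
    exact key2 _ _ _ _ (h _ _) (h _ _) (h _ _) (h _ _)

lemma fnorm_nonneg (A : Matrix (Fin 3) (Fin 3) ℝ) : 0 ≤ fnorm A := Real.sqrt_nonneg _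

lemma fnorm_jac_bound {x : E3} (hx : x ≠ 0) :
    fnorm (jac vortex x) ≤ 6 * ‖x‖ ^ (-1 : ℝ) := by
  have h := fnorm_le (by positivity) (vortex_fderiv_bound hx)
  rw [Real.rpow_neg_one]
  linarith

lemma fnorm_cof_bound {x : E3} (hx : x ≠ 0) :
    fnorm (cof (jac vortex x)) ≤ 24 * ‖x‖ ^ (-2 : ℝ) := by
  have hM0 : (0:ℝ) ≤ 2 * ‖x‖⁻¹ := by positivity
  have h := fnorm_le (M := 2 * (2 * ‖x‖⁻¹) ^ 2) (by positivity)
    (cof_entry_le hM0 (vortex_fderiv_bound hx))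
  have h2 : ‖x‖ ^ (-2 : ℝ) = ‖x‖⁻¹ ^ 2 := by
    rw [show (-2 : ℝ) = -(2:ℕ) by norm_num, Real.rpow_neg (norm_nonneg x),
      Real.rpow_natCast, inv_pow]
  rw [h2]
  nlinarith [sq_nonneg (‖x‖⁻¹)]

lemma meas_jac : Measurable fun x : E3 => (fun i j => jac vortex x i j : Fin 3 → Fin 3 → ℝ) := by
  apply measurable_pi_lambda; intro i; apply measurable_pi_lambda; intro j
  exact ((EuclideanSpace.proj i (𝕜 := ℝ)).continuous.measurable).comp
    (measurable_fderiv_apply_const ℝ vortex (EuclideanSpace.single j 1))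

lemma cont_fnorm : Continuous fun A : Fin 3 → Fin 3 → ℝ => fnorm A := by
  unfold fnorm
  refine Real.continuous_sqrt.comp ?_
  refine continuous_finset_sum _ fun i _ => continuous_finset_sum _ fun j _ => ?_
  exact ((continuous_apply_apply i j).pow 2)

lemma cont_fnorm_cof : Continuous fun A : Fin 3 → Fin 3 → ℝ => fnorm (cof A) := by
  unfold fnorm cof
  refine Real.continuous_sqrt.comp ?_
  refine continuous_finset_sum _ fun i _ => continuous_finset_sum _ fun j _ => ?_
  simp only [Matrix.transpose_apply]
  exact ((Continuous.matrix_adjugate (continuous_id (X := Matrix (Fin 3) (Fin 3) ℝ))).matrix_elem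
    j i).pow 2

lemma meas_fnorm_jac : Measurable fun x : E3 => fnorm (jac vortex x) :=
  cont_fnorm.measurable.comp meas_jac

lemma meas_fnorm_cof : Measurable fun x : E3 => fnorm (cof (jac vortex x)) :=
  cont_fnorm_cof.measurable.comp meas_jac

/-- The cofactors of the Jacobian of the vortex map are `q`-integrable on `B³` for every
`1 ≤ q < 3/2`; in particular the graph of the vortex map over `B³` has finite
3-dimensional area. -/
theorem vortex_cof_integrable :
    (∀ q : ℝ, 1 ≤ q → q < 3 / 2 →
      IntegrableOn (fun x : E3 => fnorm (cof (jac vortex x)) ^ q)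
        (Metric.ball (0 : E3) 1) volume) ∧
    IntegrableOn (fun x : E3 =>
        Real.sqrt (1 + fnorm (jac vortex x) ^ 2 + fnorm (cof (jac vortex x)) ^ 2))
      (Metric.ball (0 : E3) 1) volume := by
  have hae : ∀ᵐ x ∂(volume.restrict (Metric.ball (0:E3) 1)), x ≠ (0:E3) := by
    refine ae_restrict_of_ae ?_
    have h0 : {a : E3 | ¬ a ≠ 0} = {0} := by ext a; simp
    rw [ae_iff, h0]
    exact measure_singleton 0
  constructor
  · intro q hq1 hq2
    have h1 : (0:ℝ) < 2 * q := by linarith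
    have h2 : 2 * q < 3 := by linarith
    have hint : IntegrableOn (fun x : E3 => 24 ^ q * ‖x‖ ^ (-(2 * q)))
        (Metric.ball (0:E3) 1) volume :=
      (integrableOn_norm_rpow_neg_ball h1 h2).const_mul _
    refine hint.mono' ?_ ?_
    · have hmr : Measurable fun y : ℝ => y ^ q := by fun_prop
      exact (hmr.comp meas_fnorm_cof).aestronglyMeasurable
    · filter_upwards [hae] with x hx
      rw [Real.norm_eq_abs, abs_of_nonneg (Real.rpow_nonneg (fnorm_nonneg _) q)]
      calc fnorm (cof (jac vortex x)) ^ q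
          ≤ (24 * ‖x‖ ^ (-2:ℝ)) ^ q :=
            Real.rpow_le_rpow (fnorm_nonneg _) (fnorm_cof_bound hx) (by linarith)
        _ = 24 ^ q * ‖x‖ ^ (-(2 * q)) := by
            rw [Real.mul_rpow (by norm_num) (Real.rpow_nonneg (norm_nonneg x) _),
              ← Real.rpow_mul (norm_nonneg x)]
            ring_nf
  · have hint : IntegrableOn
        (fun x : E3 => 1 + (6 * ‖x‖ ^ (-1:ℝ)) + (24 * ‖x‖ ^ (-2:ℝ)))
        (Metric.ball (0:E3) 1) volume := by
      refine Integrable.add (Integrable.add ?_ ?_) ?_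
      · exact integrableOn_const measure_ball_lt_top.ne
      · exact (integrableOn_norm_rpow_neg_ball one_pos (by norm_num)).const_mul _
      · exact (integrableOn_norm_rpow_neg_ball two_pos (by norm_num)).const_mul _
    refine hint.mono' ?_ ?_
    · refine Measurable.aestronglyMeasurable ?_
      refine Real.continuous_sqrt.measurable.comp ?_
      exact (measurable_const.add (meas_fnorm_jac.pow_const 2)).add
        (meas_fnorm_cof.pow_const 2)
    · filter_upwards [hae] with x hx
      have ha : 0 ≤ fnorm (jac vortex x) := fnorm_nonneg _
      have hb : 0 ≤ fnorm (cof (jac vortex x)) := fnorm_nonneg _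
      have hs : Real.sqrt (1 + fnorm (jac vortex x) ^ 2 + fnorm (cof (jac vortex x)) ^ 2)
          ≤ 1 + fnorm (jac vortex x) + fnorm (cof (jac vortex x)) := by
        rw [show (1:ℝ) + fnorm (jac vortex x) + fnorm (cof (jac vortex x))
            = Real.sqrt ((1 + fnorm (jac vortex x) + fnorm (cof (jac vortex x))) ^ 2) by
              rw [Real.sqrt_sq (by positivity)]]
        refine Real.sqrt_le_sqrt ?_
        nlinarith
      rw [Real.norm_eq_abs, abs_of_nonneg (Real.sqrt_nonneg _)]
      have h1 := fnorm_jac_bound hx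
      have h2 := fnorm_cof_bound hx
      linarith
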